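/- arXiv:math/0608246 — 2 statements merged into one kernel-verified Lean document; each statement's English description precedes it below -/
import Mathlib

section
/- Let (σ,τ) be a weighted substitution with σ primitive, and let G = B(σ,τ) be the closed multiplicative subgroup of ℝ₊ generated by {τ^n(a)_i : n ≥ 0, σ^n(a)_i = a}. Then there exists a function g: 𝔸 → ℝ₊ such that g(σ(a)_i)·G = g(a)·τ(a)_i·G for every a ∈ 𝔸 and 0 ≤ i < |σ(a)|. -/
def wStep {A : Type} (σ : A → List A) (τ : A → List ℝ) :
    List (A × ℝ) → List (A × ℝ) :=
  fun l => l.flatMap fun p => ((σ p.1).zip (τ p.1)).map fun q => (q.1, p.2 * q.2)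

/-- Generators of the base set: the weights `τ^n(a)_i` of occurrences of `a`
in `σ^n(a)`, for all `n ≥ 0` and `a`. -/
def baseGens {A : Type} (σ : A → List A) (τ : A → List ℝ) : Set ℝ :=
  {w | ∃ (n : ℕ) (a : A), (a, w) ∈ (wStep σ τ)^[n] [(a, 1)]}

/-- The base set `B(σ,τ)`: the closed multiplicative subgroup of `ℝ₊`
generated by `baseGens`, i.e. the positive reals lying in the closure of the
multiplicative subgroup generated by the weights of returning occurrences. -/
def baseSet {A : Type} (σ : A → List A) (τ : A → List ℝ) : Set ℝ :=
  {x | 0 < x ∧ x ∈ closure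
    (↑(Submonoid.closure (baseGens σ τ ∪ (baseGens σ τ)⁻¹)) : Set ℝ)}

/-!
Fix a letter `d`. By primitivity every letter `a` occurs in `σ^N(d)`; let `g a` be the weight
of one such occurrence. If a letter `b` occurs in `σ^n(d)` and in `σ^m(d)` with weights `w`
and `w'`, then following each occurrence by an occurrence of `d` in `σ^N(b)`, of weight `u`,
gives returning occurrences of `d` with weights `w u` and `w' u`; hence `w / w' ∈ G`.
Applied to the occurrence of `b = σ(a)_i` in `σ^{N+1}(d)` of weight `g a · τ(a)_i` and to the
one of weight `g b` in `σ^N(d)`, this is the claim.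
-/

lemma inv_mem_closure_union_inv {M : Type*} [DivisionMonoid M] {s : Set M} {x : M}
    (hx : x ∈ Submonoid.closure (s ∪ s⁻¹)) : x⁻¹ ∈ Submonoid.closure (s ∪ s⁻¹) := by
  induction hx using Submonoid.closure_induction with
  | mem y hy =>
    refine Submonoid.subset_closure ?_
    rcases hy with hy | hy
    · exact Or.inr (Set.inv_mem_inv.mpr hy)
    · exact Or.inl hy
  | one => simp
  | mul y z _ _ hy hz => simpa only [mul_inv_rev] using mul_mem hz hy

lemma coset_eq_of_mul_inv_mem {G₀ : Type*} [CommGroupWithZero G₀] {S : Set G₀}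
    (hmul : ∀ x ∈ S, ∀ y ∈ S, x * y ∈ S) (hinv : ∀ x ∈ S, x⁻¹ ∈ S)
    {u v : G₀} (hu : u ≠ 0) (hv : v ≠ 0) (h : u * v⁻¹ ∈ S) :
    {x | ∃ y ∈ S, x = u * y} = {x | ∃ y ∈ S, x = v * y} := by
  ext x
  constructor
  · rintro ⟨y, hy, rfl⟩
    exact ⟨u * v⁻¹ * y, hmul _ h _ hy, by field_simp⟩
  · rintro ⟨y, hy, rfl⟩
    exact ⟨(u * v⁻¹)⁻¹ * y, hmul _ (hinv _ h) _ hy, by field_simp⟩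

section BaseSet

variable {A : Type} (σ : A → List A) (τ : A → List ℝ)

lemma baseSet_mul {x y : ℝ} (hx : x ∈ baseSet σ τ) (hy : y ∈ baseSet σ τ) :
    x * y ∈ baseSet σ τ :=
  ⟨mul_pos hx.1 hy.1, (Submonoid.closure _).topologicalClosure.mul_mem hx.2 hy.2⟩

lemma baseSet_inv {x : ℝ} (hx : x ∈ baseSet σ τ) : x⁻¹ ∈ baseSet σ τ := by
  obtain ⟨u, hu, hlim⟩ := mem_closure_iff_seq_limit.mp hx.2
  exact ⟨inv_pos.mpr hx.1, mem_closure_iff_seq_limit.mpr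
    ⟨fun n => (u n)⁻¹, fun n => inv_mem_closure_union_inv (hu n), hlim.inv₀ hx.1.ne'⟩⟩

lemma mul_inv_mem_baseSet {x y : ℝ} (hx : x ∈ baseGens σ τ) (hy : y ∈ baseGens σ τ)
    (hx₀ : 0 < x) (hy₀ : 0 < y) : x * y⁻¹ ∈ baseSet σ τ :=
  ⟨by positivity, subset_closure <| mul_mem (Submonoid.subset_closure (Or.inl hx))
    (Submonoid.subset_closure (Or.inr (Set.inv_mem_inv.mpr hy)))⟩

end BaseSet

section Iterate

variable {A : Type} (σ : A → List A) (τ : A → List ℝ)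

lemma wStep_iterate_mono (n : ℕ) {l l' : List (A × ℝ)} (h : l ⊆ l') :
    (wStep σ τ)^[n] l ⊆ (wStep σ τ)^[n] l' := by
  induction n generalizing l l' with
  | zero => exact h
  | succ n ih =>
    simp only [Function.iterate_succ_apply]
    refine ih fun p hp => ?_
    obtain ⟨q, hq, hpq⟩ := List.mem_flatMap.mp hp
    exact List.mem_flatMap.mpr ⟨q, h hq, hpq⟩

lemma wStep_iterate_map_mul (n : ℕ) (w : ℝ) (l : List (A × ℝ)) :
    (wStep σ τ)^[n] (l.map fun p => (p.1, w * p.2)) =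
      ((wStep σ τ)^[n] l).map fun p => (p.1, w * p.2) := by
  induction n generalizing l with
  | zero => rfl
  | succ n ih =>
    simp only [Function.iterate_succ_apply]
    rw [← ih]
    congr 1
    simp only [wStep, List.flatMap_map, List.map_flatMap, List.map_map]
    exact List.flatMap_congr fun p _ => by simp [Function.comp_def, mul_assoc]

lemma mem_wStep_iterate_add {n m : ℕ} {a b c : A} {w u : ℝ}
    (hab : (b, w) ∈ (wStep σ τ)^[n] [(a, 1)]) (hbc : (c, u) ∈ (wStep σ τ)^[m] [(b, 1)]) :
    (c, w * u) ∈ (wStep σ τ)^[m + n] [(a, 1)] := by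
  rw [Function.iterate_add_apply]
  refine wStep_iterate_mono σ τ m (l := [(b, w)]) (by simpa using hab) ?_
  have := List.mem_map_of_mem (f := fun p : A × ℝ => (p.1, w * p.2)) hbc
  rwa [← wStep_iterate_map_mul, List.map_singleton, mul_one] at this

lemma mem_wStep_iterate_one_of_lt (hlen : ∀ a, (σ a).length = (τ a).length) [Inhabited A] {a : A} {i : ℕ}
    (hi : i < (σ a).length) :
    ((σ a).getD i default, (τ a).getD i 0) ∈ (wStep σ τ)^[1] [(a, 1)] := by
  have hτ : i < (τ a).length := hlen a ▸ hi
  have hz : i < ((σ a).zip (τ a)).length := by simp [hτ, hi]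
  rw [List.getD_eq_getElem _ _ hi, List.getD_eq_getElem _ _ hτ]
  simpa [wStep] using List.getElem_mem hz

lemma pos_of_mem_wStep_iterate (hpos : ∀ a, ∀ w ∈ τ a, 0 < w) {n : ℕ} {l : List (A × ℝ)}
    (hl : ∀ p ∈ l, 0 < p.2) {p : A × ℝ} (hp : p ∈ (wStep σ τ)^[n] l) : 0 < p.2 := by
  induction n generalizing l with
  | zero => exact hl p hp
  | succ n ih =>
    rw [Function.iterate_succ_apply] at hp
    refine ih ?_ hp
    simp only [wStep, List.mem_flatMap, List.mem_map]
    rintro _ ⟨q, hq, r, hr, rfl⟩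
    exact mul_pos (hl q hq) (hpos _ _ (List.of_mem_zip hr).2)

end Iterate

lemma mul_inv_mem_baseSet_of_mem_wStep_iterate {A : Type} {σ : A → List A} {τ : A → List ℝ}
    (hpos : ∀ a, ∀ w ∈ τ a, 0 < w) {n m k : ℕ} {a b : A} {w w' u : ℝ}
    (hw : (b, w) ∈ (wStep σ τ)^[n] [(a, 1)]) (hw' : (b, w') ∈ (wStep σ τ)^[m] [(a, 1)])
    (hu : (a, u) ∈ (wStep σ τ)^[k] [(b, 1)]) : w * w'⁻¹ ∈ baseSet σ τ := by
  have hu₀ : 0 < u := pos_of_mem_wStep_iterate σ τ hpos (by simp) hu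
  have hw₀ : 0 < w := pos_of_mem_wStep_iterate σ τ hpos (by simp) hw
  have hw₀' : 0 < w' := pos_of_mem_wStep_iterate σ τ hpos (by simp) hw'
  have hgen := mul_inv_mem_baseSet σ τ ⟨k + n, a, mem_wStep_iterate_add σ τ hw hu⟩
    ⟨k + m, a, mem_wStep_iterate_add σ τ hw' hu⟩ (by positivity) (by positivity)
  rwa [mul_inv_rev, mul_assoc, mul_inv_cancel_left₀ hu₀.ne'] at hgen

theorem exists_height_function_general
    (A : Type) [Inhabited A]
    (σ : A → List A) (τ : A → List ℝ)
    (hlen : ∀ a, (σ a).length = (τ a).length)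
    (hw : ∀ a, ∀ w ∈ τ a, 0 < w ∧ w < 1)
    (hprim : ∃ n : ℕ, 1 ≤ n ∧ ∀ a a' : A,
      ∃ p ∈ (wStep σ τ)^[n] [(a, 1)], p.1 = a') :
    ∃ g : A → ℝ, (∀ a, 0 < g a) ∧
      ∀ (a : A) (i : ℕ), i < (σ a).length →
        {x : ℝ | ∃ y ∈ baseSet σ τ, x = g ((σ a).getD i default) * y} =
        {x : ℝ | ∃ y ∈ baseSet σ τ, x = g a * (τ a).getD i 0 * y} := by
  obtain ⟨N, -, hN⟩ := hprim
  have hpos : ∀ a, ∀ w ∈ τ a, 0 < w := fun a w h => (hw a w h).1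
  have hocc : ∀ a b : A, ∃ w, (b, w) ∈ (wStep σ τ)^[N] [(a, 1)] := fun a b => by
    obtain ⟨⟨c, w⟩, hmem, rfl⟩ := hN a b
    exact ⟨w, hmem⟩
  choose g hg using hocc default
  choose u hu using fun b => hocc b default
  have hg₀ : ∀ a, 0 < g a := fun a => pos_of_mem_wStep_iterate σ τ hpos (by simp) (hg a)
  refine ⟨g, hg₀, fun a i hi => ?_⟩
  have hτ₀ : 0 < (τ a).getD i 0 := pos_of_mem_wStep_iterate σ τ hpos (by simp)
    (mem_wStep_iterate_one_of_lt σ τ hlen hi)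
  exact coset_eq_of_mul_inv_mem (fun _ hx _ hy => baseSet_mul σ τ hx hy)
    (fun _ hx => baseSet_inv σ τ hx) (hg₀ _).ne' (mul_pos (hg₀ a) hτ₀).ne'
    (mul_inv_mem_baseSet_of_mem_wStep_iterate hpos (hg _)
      (mem_wStep_iterate_add σ τ (hg a) (mem_wStep_iterate_one_of_lt σ τ hlen hi)) (hu _))

/-- For a primitive weighted substitution `(σ, τ)` with base group
`G = B(σ, τ)`, there is a function `g : 𝔸 → ℝ₊` with
`g(σ(a)_i)·G = g(a)·τ(a)_i·G` for all `a` and `0 ≤ i < |σ(a)|`. -/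
theorem exists_height_function
    (A : Type) [Fintype A] [Inhabited A]
    (σ : A → List A) (τ : A → List ℝ)
    (hlen : ∀ a, (σ a).length = (τ a).length)
    (hne : ∀ a, σ a ≠ [])
    (hw : ∀ a, ∀ w ∈ τ a, 0 < w ∧ w < 1)
    (hsum : ∀ a, (τ a).sum = 1)
    (hprim : ∃ n : ℕ, 1 ≤ n ∧ ∀ a a' : A,
      ∃ p ∈ (wStep σ τ)^[n] [(a, 1)], p.1 = a') :
    ∃ g : A → ℝ, (∀ a, 0 < g a) ∧
      ∀ (a : A) (i : ℕ), i < (σ a).length →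
        {x : ℝ | ∃ y ∈ baseSet σ τ, x = g ((σ a).getD i default) * y} =
        {x : ℝ | ∃ y ∈ baseSet σ τ, x = g a * (τ a).getD i 0 * y} :=
  exists_height_function_general A σ τ hlen hw hprim
end

section
/- Let (σ,τ) be a weighted substitution on a finite alphabet 𝔸 with σ primitive, and suppose B(σ,τ) = {λ^n : n ∈ ℤ} for some λ > 1. Then λ is an algebraic number. -/
/-!
Fix a letter `a₀` and, using primitivity, path weights `v b` from `a₀` to every `b`. Closed-path
weights lie in `B(σ,τ) = λ^ℤ`, so every path weight from `a₀` to `b` is `λ^k * v b`. Let `ρ < 1`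
bound all weights and pass to a root `μ = λ^(1/R)` with `μ * ρ ≤ 1`. Then an edge `a → b` of
weight `t` satisfies `v a * t = μ^k * v b` for some `k : ℤ`, and a path of length `n` and weight
`μ^k * v b` has `μ^(k+n) * v b ≤ 1`. So the integers `-(k+n)` over such paths are bounded below,
and their infimum `d b` is a potential with `d b + k < d a` along every edge. Rescaling `v` by
`μ^(-d)` turns `∑ t = 1` into `M(μ⁻¹) w = w` for a matrix `M(X)` of monomials
`X^(d a - k - d b)` of positive degree, so the polynomial `det (1 - M(X))`, whose constant term
is `1`, vanishes at `μ⁻¹`. Hence `μ` and `λ = μ^R` are algebraic.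
-/

open Polynomial
open scoped Matrix

section EdgeMatrix

variable {A : Type*} [DecidableEq A]

theorem isAlgebraic_of_mulVec_eq_self [Fintype A] {K L : Type*} [CommRing K] [Nontrivial K]
    [CommRing L] [IsDomain L] [Algebra K L] (M : Matrix A A K[X]) (hM : ∀ a b, (M a b).eval 0 = 0)
    {y : L} {v : A → L} (hv : v ≠ 0) (h : M.map (aeval y) *ᵥ v = v) : IsAlgebraic K y := by
  refine ⟨(1 - M).det, fun h0 => ?_, ?_⟩
  · have hM0 : (evalRingHom 0).mapMatrix M = 0 := Matrix.ext hM
    have h1 : evalRingHom (0 : K) (1 - M).det = 1 := by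
      rw [RingHom.map_det, map_sub, map_one, hM0, sub_zero, Matrix.det_one]
    simp [h0] at h1
  · rw [AlgHom.map_det, map_sub, map_one, ← Matrix.exists_mulVec_eq_zero_iff]
    exact ⟨v, hv, by rw [Matrix.sub_mulVec, Matrix.one_mulVec]; exact sub_eq_zero.2 h.symm⟩

variable {ι : A → Type*} [∀ a, Fintype (ι a)]

def edgeMatrix {R : Type*} [AddCommMonoid R] (s : ∀ a, ι a → A) (f : ∀ a, ι a → R) :
    Matrix A A R :=
  Matrix.of fun a b => ∑ i, if s a i = b then f a i else 0

theorem map_edgeMatrix {R S F : Type*} [AddCommMonoid R] [AddCommMonoid S] [FunLike F R S]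
    [AddMonoidHomClass F R S] (φ : F) (s : ∀ a, ι a → A) (f : ∀ a, ι a → R) :
    (edgeMatrix s f).map φ = edgeMatrix s fun a i => φ (f a i) := by
  ext a b
  simp [edgeMatrix, map_sum, apply_ite φ]

variable [Fintype A]

theorem edgeMatrix_mulVec {R : Type*} [NonUnitalNonAssocSemiring R] (s : ∀ a, ι a → A)
    (f : ∀ a, ι a → R) (v : A → R) (a : A) :
    (edgeMatrix s f *ᵥ v) a = ∑ i, f a i * v (s a i) := by
  simp only [Matrix.mulVec, dotProduct, edgeMatrix, Matrix.of_apply, Finset.sum_mul, ite_mul,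
    zero_mul]
  rw [Finset.sum_comm]
  simp

theorem isAlgebraic_of_sum_pow_mul_eq {K L : Type*} [CommRing K] [Nontrivial K] [CommRing L]
    [IsDomain L] [Algebra K L] (s : ∀ a, ι a → A) (E : ∀ a, ι a → ℕ) (hE : ∀ a i, E a i ≠ 0)
    {y : L} {v : A → L} (hv : v ≠ 0) (h : ∀ a, ∑ i, y ^ E a i * v (s a i) = v a) :
    IsAlgebraic K y := by
  refine isAlgebraic_of_mulVec_eq_self (edgeMatrix s fun a i => (X : K[X]) ^ E a i) ?_ hv ?_
  · intro a b
    rw [edgeMatrix, Matrix.of_apply, eval_finsetSum]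
    refine Finset.sum_eq_zero fun i _ => ?_
    split_ifs <;> simp [hE]
  · ext a
    rw [map_edgeMatrix, edgeMatrix_mulVec]
    simpa using h a

end EdgeMatrix

theorem exists_forall_le_of_forall_lt_one {ι : Type*} [Fintype ι] (l : ι → List ℝ)
    (h : ∀ i, ∀ x ∈ l i, x < 1) : ∃ ρ, 0 < ρ ∧ ρ < 1 ∧ ∀ i, ∀ x ∈ l i, x ≤ ρ := by
  classical
  set S := insert (1 / 2 : ℝ) (Finset.univ.biUnion fun i => (l i).toFinset)
  have hS : S.Nonempty := Finset.insert_nonempty _ _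
  refine ⟨S.max' hS, ?_, ?_, fun i x hx => S.le_max' x ?_⟩
  · exact one_half_pos.trans_le (S.le_max' _ (Finset.mem_insert_self _ _))
  · obtain hmax | hmax := Finset.mem_insert.1 (S.max'_mem hS)
    · rw [hmax]; norm_num
    · obtain ⟨i, -, hi⟩ := Finset.mem_biUnion.1 hmax
      exact h i _ (List.mem_toFinset.1 hi)
  · exact Finset.mem_insert_of_mem
      (Finset.mem_biUnion.2 ⟨i, Finset.mem_univ _, List.mem_toFinset.2 hx⟩)

theorem exists_root_mul_le_one {lam ρ : ℝ} (hlam : 1 < lam) (hρ0 : 0 ≤ ρ) (hρ1 : ρ < 1) :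
    ∃ (R : ℕ) (μ : ℝ), 1 < μ ∧ μ ^ R = lam ∧ μ * ρ ≤ 1 := by
  have hlam0 : 0 < lam := one_pos.trans hlam
  obtain ⟨R, hR⟩ := exists_pow_lt_of_lt_one (inv_pos.2 hlam0) hρ1
  have hR0 : R ≠ 0 := by
    rintro rfl
    exact (inv_lt_one_of_one_lt₀ hlam).not_gt (by simpa using hR)
  set μ := lam ^ ((R : ℝ)⁻¹)
  have hμR : μ ^ R = lam := Real.rpow_inv_natCast_pow hlam0.le hR0
  have hμ0 : 0 ≤ μ := Real.rpow_nonneg hlam0.le _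
  refine ⟨R, μ, ?_, hμR, ?_⟩
  · rw [← one_lt_pow_iff_of_nonneg hμ0 hR0, hμR]
    exact hlam
  · refine ((pow_lt_one_iff_of_nonneg (mul_nonneg hμ0 hρ0) hR0).1 ?_).le
    rw [mul_pow, hμR]
    calc lam * ρ ^ R < lam * lam⁻¹ := mul_lt_mul_of_pos_left hR hlam0
      _ = 1 := mul_inv_cancel₀ hlam0.ne'

theorem bddAbove_setOf_zpow_mul_le_one {μ c : ℝ} (hμ : 1 < μ) (hc : 0 < c) :
    BddAbove {m : ℤ | μ ^ m * c ≤ 1} := by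
  obtain ⟨N, hN⟩ := pow_unbounded_of_one_lt (1 / c) hμ
  refine ⟨N, fun m hm => ?_⟩
  have hm' : μ ^ m < μ ^ (N : ℤ) := by
    rw [zpow_natCast]
    exact ((le_div_iff₀ hc).2 hm).trans_lt hN
  exact ((zpow_lt_zpow_iff_right₀ hμ).1 hm').le

theorem exists_potential {A : Type*} (S : A → Set ℤ) (hne : ∀ a, (S a).Nonempty)
    (hbdd : ∀ a, BddBelow (S a)) (E : A → A → ℤ → Prop)
    (hS : ∀ a b c, E a b c → ∀ j ∈ S a, j - c ∈ S b) :
    ∃ d : A → ℤ, ∀ a b c, E a b c → d b + c ≤ d a := by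
  refine ⟨fun a => sInf (S a), fun a b c hE => ?_⟩
  have := csInf_le (hbdd b) (hS a b c hE _ (Int.csInf_mem (hne a) (hbdd a)))
  linarith

theorem isAlgebraic_of_exists_potential {A K L : Type*} [Fintype A] [CommRing K] [Nontrivial K]
    [Field L] [Algebra K L] {e : A → List (A × L)} (he : ∀ a, ((e a).map Prod.snd).sum = 1)
    {μ : L} (hμ : μ ≠ 0) {v : A → L} (hv : v ≠ 0) {d : A → ℤ}
    (hd : ∀ a, ∀ p ∈ e a, ∃ k : ℤ, d p.1 + k < d a ∧ v a * p.2 = μ ^ k * v p.1) :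
    IsAlgebraic K μ := by
  classical
  choose k hk_lt hk_eq using fun a (i : Fin (e a).length) => hd a _ (List.getElem_mem i.2)
  set E : ∀ a, Fin (e a).length → ℕ := fun a i => (d a - k a i - d (e a)[i.1].1).toNat
  have hE : ∀ a i, (E a i : ℤ) = d a - k a i - d (e a)[i.1].1 := fun a i =>
    Int.toNat_of_nonneg (by linarith [hk_lt a i])
  set w : A → L := fun a => μ ^ (-d a) * v a
  have hw : w ≠ 0 := by
    obtain ⟨a, ha⟩ := Function.ne_iff.1 hv
    exact Function.ne_iff.2 ⟨a, mul_ne_zero (zpow_ne_zero _ hμ) ha⟩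
  have hterm : ∀ a i, μ⁻¹ ^ E a i * w (e a)[i.1].1 = w a * (e a)[i.1].2 := fun a i => by
    simp only [w]
    rw [inv_pow, ← zpow_natCast, hE, ← zpow_neg, mul_assoc (μ ^ (-d a)), hk_eq, ← mul_assoc,
      ← mul_assoc, ← zpow_add₀ hμ, ← zpow_add₀ hμ]
    congr 2
    ring
  have hμinv : IsAlgebraic K μ⁻¹ := by
    refine isAlgebraic_of_sum_pow_mul_eq (fun a i => (e a)[i.1].1) E (fun a i => ?_) hw fun a => ?_
    · have := hE a i
      have := hk_lt a i
      omega
    · simp only [hterm, ← Finset.mul_sum, Fin.sum_univ_fun_getElem, he, mul_one]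
  simpa using hμinv.inv

section WeightedPath

variable {A : Type} {σ : A → List A} {τ : A → List ℝ}

def WeightedPath (σ : A → List A) (τ : A → List ℝ) (n : ℕ) (a b : A) (w : ℝ) : Prop :=
  (b, w) ∈ (wStep σ τ)^[n] [(a, 1)]

theorem weightedPath_zero_iff {a b : A} {w : ℝ} : WeightedPath σ τ 0 a b w ↔ b = a ∧ w = 1 := by
  simp [WeightedPath]

theorem weightedPath_succ_iff {n : ℕ} {a c : A} {w : ℝ} :
    WeightedPath σ τ (n + 1) a c w ↔
      ∃ b u t, WeightedPath σ τ n a b u ∧ (c, t) ∈ (σ b).zip (τ b) ∧ w = u * t := by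
  simp only [WeightedPath, Function.iterate_succ_apply', wStep, List.mem_flatMap, List.mem_map,
    Prod.mk.injEq, Prod.exists]
  constructor
  · rintro ⟨b, u, hpath, _, t, hedge, rfl, rfl⟩
    exact ⟨b, u, t, hpath, hedge, rfl⟩
  · rintro ⟨b, u, t, hpath, hedge, rfl⟩
    exact ⟨b, u, hpath, c, t, hedge, rfl, rfl⟩

theorem weightedPath_one_of_mem_zip {a b : A} {t : ℝ} (h : (b, t) ∈ (σ a).zip (τ a)) :
    WeightedPath σ τ 1 a b t :=
  weightedPath_succ_iff.2 ⟨a, 1, t, weightedPath_zero_iff.2 ⟨rfl, rfl⟩, h, (one_mul t).symm⟩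

theorem WeightedPath.trans {m n : ℕ} {a b c : A} {w u : ℝ} (h₁ : WeightedPath σ τ m a b w)
    (h₂ : WeightedPath σ τ n b c u) : WeightedPath σ τ (m + n) a c (w * u) := by
  induction n generalizing c u with
  | zero =>
    obtain ⟨rfl, rfl⟩ := weightedPath_zero_iff.1 h₂
    simpa using h₁
  | succ n ih =>
    obtain ⟨c', u', t, h₂', hedge, rfl⟩ := weightedPath_succ_iff.1 h₂
    exact weightedPath_succ_iff.2 ⟨c', w * u', t, ih h₂', hedge, by ring⟩

theorem WeightedPath.pos (hpos : ∀ a, ∀ x ∈ τ a, 0 < x) {n : ℕ} {a b : A} {w : ℝ}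
    (h : WeightedPath σ τ n a b w) : 0 < w := by
  induction n generalizing b w with
  | zero => simp [(weightedPath_zero_iff.1 h).2]
  | succ n ih =>
    obtain ⟨b', u, t, h', hedge, rfl⟩ := weightedPath_succ_iff.1 h
    exact mul_pos (ih h') (hpos b' t (List.of_mem_zip hedge).2)

theorem WeightedPath.le_pow (hpos : ∀ a, ∀ x ∈ τ a, 0 < x) {ρ : ℝ} (hρ : ∀ a, ∀ x ∈ τ a, x ≤ ρ)
    {n : ℕ} {a b : A} {w : ℝ} (h : WeightedPath σ τ n a b w) : w ≤ ρ ^ n := by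
  induction n generalizing b w with
  | zero => simp [(weightedPath_zero_iff.1 h).2]
  | succ n ih =>
    obtain ⟨b', u, t, h', hedge, rfl⟩ := weightedPath_succ_iff.1 h
    have ht := (List.of_mem_zip hedge).2
    rw [pow_succ]
    exact mul_le_mul (ih h') (hρ b' t ht) (hpos b' t ht).le ((h'.pos hpos).le.trans (ih h'))

theorem baseGens_subset_baseSet (hpos : ∀ a, ∀ x ∈ τ a, 0 < x) : baseGens σ τ ⊆ baseSet σ τ :=
  fun _ hg => ⟨let ⟨_, _, h⟩ := hg; WeightedPath.pos hpos h,
    subset_closure (Submonoid.subset_closure (Or.inl hg))⟩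

theorem WeightedPath.exists_zpow_mul_eq {μ : ℝ} (hμ : μ ≠ 0)
    (hgen : ∀ g ∈ baseGens σ τ, ∃ z : ℤ, g = μ ^ z) {m n l : ℕ} {a b : A} {v u w : ℝ}
    (hv : WeightedPath σ τ m a b v) (hu : WeightedPath σ τ n b a u) (hv0 : v ≠ 0) (hu0 : u ≠ 0)
    (hw : WeightedPath σ τ l a b w) : ∃ z : ℤ, w = μ ^ z * v := by
  obtain ⟨z₁, hz₁⟩ := hgen (w * u) ⟨_, a, hw.trans hu⟩
  obtain ⟨z₂, hz₂⟩ := hgen (v * u) ⟨_, a, hv.trans hu⟩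
  refine ⟨z₁ - z₂, ?_⟩
  rw [zpow_sub₀ hμ, ← hz₁, ← hz₂]
  field_simp

theorem exists_potential_of_weightedPath (hpos : ∀ a, ∀ x ∈ τ a, 0 < x) {ρ μ : ℝ} (hρ0 : 0 ≤ ρ)
    (hρ : ∀ a, ∀ x ∈ τ a, x ≤ ρ) (hμ : 1 < μ) (hμρ : μ * ρ ≤ 1) {a₀ : A} {v : A → ℝ}
    (hv0 : ∀ b, 0 < v b) (hv : ∀ b, ∃ n, WeightedPath σ τ n a₀ b (v b)) :
    ∃ d : A → ℤ, ∀ a, ∀ p ∈ (σ a).zip (τ a), ∀ k : ℤ,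
      v a * p.2 = μ ^ k * v p.1 → d p.1 + k < d a := by
  have hμ0 : μ ≠ 0 := (one_pos.trans hμ).ne'
  set S : A → Set ℤ :=
    fun b => {j | ∃ (n : ℕ) (k : ℤ), WeightedPath σ τ n a₀ b (μ ^ k * v b) ∧ j = -(k + n)}
  have hne : ∀ b, (S b).Nonempty := fun b =>
    let ⟨n, hn⟩ := hv b
    ⟨_, n, 0, by simpa using hn, rfl⟩
  have hbdd : ∀ b, BddBelow (S b) := by
    intro b
    obtain ⟨N, hN⟩ := bddAbove_setOf_zpow_mul_le_one hμ (hv0 b)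
    refine ⟨-N, ?_⟩
    rintro _ ⟨n, k, hpath, rfl⟩
    suffices μ ^ (k + n) * v b ≤ 1 by linarith [hN this]
    calc μ ^ (k + n) * v b = μ ^ n * (μ ^ k * v b) := by rw [zpow_add₀ hμ0, zpow_natCast]; ring
      _ ≤ μ ^ n * ρ ^ n := by gcongr; exact hpath.le_pow hpos hρ
      _ = (μ * ρ) ^ n := (mul_pow μ ρ n).symm
      _ ≤ 1 := pow_le_one₀ (mul_nonneg (one_pos.trans hμ).le hρ0) hμρ
  obtain ⟨d, hd⟩ := exists_potential S hne hbdd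
    (fun a b c => ∃ t k, (b, t) ∈ (σ a).zip (τ a) ∧ v a * t = μ ^ k * v b ∧ c = k + 1) <| by
      rintro a b _ ⟨t, k', hedge, hk', rfl⟩ _ ⟨n, k, hpath, rfl⟩
      refine ⟨n + 1, k + k', ?_, by push_cast; ring⟩
      have := hpath.trans (weightedPath_one_of_mem_zip hedge)
      rwa [mul_assoc, hk', ← mul_assoc, ← zpow_add₀ hμ0] at this
  refine ⟨d, fun a p hp k hk => ?_⟩
  have := hd a p.1 (k + 1) ⟨p.2, k, hp, hk, rfl⟩
  omega

end WeightedPath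

theorem base_generator_algebraic_general
    (A : Type) [Fintype A] [Inhabited A]
    (σ : A → List A) (τ : A → List ℝ)
    (hlen : ∀ a, (σ a).length = (τ a).length)
    (hw : ∀ a, ∀ w ∈ τ a, 0 < w ∧ w < 1)
    (hsum : ∀ a, (τ a).sum = 1)
    (hprim : ∃ n : ℕ, 1 ≤ n ∧ ∀ a a' : A,
      ∃ p ∈ (wStep σ τ)^[n] [(a, 1)], p.1 = a')
    (lam : ℝ) (hlam : 1 < lam)
    (hbase : baseSet σ τ = {x : ℝ | ∃ n : ℤ, x = lam ^ n}) :
    IsAlgebraic ℚ lam := by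
  have hpos : ∀ a, ∀ x ∈ τ a, 0 < x := fun a x hx => (hw a x hx).1
  obtain ⟨ρ, hρ0, hρ1, hρ⟩ := exists_forall_le_of_forall_lt_one τ fun a x hx => (hw a x hx).2
  obtain ⟨R, μ, hμ, rfl, hμρ⟩ := exists_root_mul_le_one hlam hρ0.le hρ1
  have hμ0 : μ ≠ 0 := (one_pos.trans hμ).ne'
  have hgen : ∀ g ∈ baseGens σ τ, ∃ z : ℤ, g = μ ^ z := fun g hg => by
    obtain ⟨z, rfl⟩ : g ∈ {x : ℝ | ∃ n : ℤ, x = (μ ^ R) ^ n} :=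
      hbase ▸ baseGens_subset_baseSet hpos hg
    exact ⟨R * z, by rw [zpow_mul, zpow_natCast]⟩
  obtain ⟨n₀, -, hprim⟩ := hprim
  have hconn : ∀ a b, ∃ w, WeightedPath σ τ n₀ a b w := fun a b =>
    let ⟨p, hp, hpb⟩ := hprim a b
    ⟨p.2, hpb ▸ hp⟩
  choose v hv using hconn default
  choose u hu using fun b => hconn b default
  have hv0 : ∀ b, 0 < v b := fun b => (hv b).pos hpos
  obtain ⟨d, hd⟩ := exists_potential_of_weightedPath hpos hρ0.le hρ hμ hμρ hv0 fun b => ⟨n₀, hv b⟩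
  have hedge : ∀ a, ∀ p ∈ (σ a).zip (τ a),
      ∃ k : ℤ, d p.1 + k < d a ∧ v a * p.2 = μ ^ k * v p.1 := by
    rintro a ⟨b, t⟩ hp
    obtain ⟨k, hk⟩ := (hv b).exists_zpow_mul_eq hμ0 hgen (hu b) (hv0 b).ne'
      ((hu b).pos hpos).ne' ((hv a).trans (weightedPath_one_of_mem_zip hp))
    exact ⟨k, hd a _ hp k hk, hk⟩
  refine (isAlgebraic_of_exists_potential (fun a => ?_) hμ0 ?_ hedge).pow R
  · rw [List.map_snd_zip (hlen a).ge, hsum]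
  · exact Function.ne_iff.2 ⟨default, (hv0 default).ne'⟩

/-- Theorem 4.4: if `(σ, τ)` is a primitive weighted substitution whose base
set is the discrete group `B(σ,τ) = {lam^n : n ∈ ℤ}` with `lam > 1`, then
`lam` is an algebraic number. -/
theorem base_generator_algebraic
    (A : Type) [Fintype A] [Inhabited A]
    (σ : A → List A) (τ : A → List ℝ)
    (hlen : ∀ a, (σ a).length = (τ a).length)
    (hne : ∀ a, σ a ≠ [])
    (hw : ∀ a, ∀ w ∈ τ a, 0 < w ∧ w < 1)
    (hsum : ∀ a, (τ a).sum = 1)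
    (hprim : ∃ n : ℕ, 1 ≤ n ∧ ∀ a a' : A,
      ∃ p ∈ (wStep σ τ)^[n] [(a, 1)], p.1 = a')
    (lam : ℝ) (hlam : 1 < lam)
    (hbase : baseSet σ τ = {x : ℝ | ∃ n : ℤ, x = lam ^ n}) :
    IsAlgebraic ℚ lam :=
  base_generator_algebraic_general A σ τ hlen hw hsum hprim lam hlam hbase
end
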